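/- arXiv:1307.2187 — 6 statements merged into one kernel-verified Lean document; each statement's English description precedes it below -/
import Mathlib

section
/- Let D₁,…,D_r be trees each of pathwidth at most c, let P be a path on at least r vertices, and let D be the graph obtained by attaching each tree D_i by identifying its root with a distinct vertex of P. Then the pathwidth of D is at most max(1, c+1). -/
/-- `pwLE G w` : `G` has a path decomposition of width at most `w`
(bags indexed by `Fin m`, every vertex occurs in a contiguous interval of bags,
every edge is contained in some bag, all bags have at most `w+1` vertices). -/
def pwLE {V : Type*} (G : SimpleGraph V) (w : ℕ) : Prop :=
  ∃ (m : ℕ) (β : Fin m → Finset V),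
    (∀ v, ∃ i, v ∈ β i) ∧
    (∀ u v, G.Adj u v → ∃ i, u ∈ β i ∧ v ∈ β i) ∧
    (∀ (v : V) (i j k : Fin m), i ≤ j → j ≤ k → v ∈ β i → v ∈ β k → v ∈ β j) ∧
    (∀ i, (β i).card ≤ w + 1)

/-- Lemma 2.6: if `D` is obtained from a path `p : Fin m → V` by attaching `r` trees
`D.induce (W i)` of pathwidth at most `c`, each at a distinct vertex `p (a i)` of the
path (the root of the `i`-th tree), then `D` has pathwidth at most `max 1 (c+1)`. -/
theorem stmt2 {V : Type*} (D : SimpleGraph V) (c r m : ℕ)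
    (p : Fin m → V) (hp : Function.Injective p)
    (hpadj : ∀ (j : ℕ) (h : j + 1 < m),
      D.Adj (p ⟨j, Nat.lt_of_succ_lt h⟩) (p ⟨j + 1, h⟩))
    (W : Fin r → Set V) (a : Fin r → Fin m) (ha : Function.Injective a)
    (hdisj : ∀ i j, i ≠ j → Disjoint (W i) (W j))
    (hWpath : ∀ i, W i ∩ Set.range p = {p (a i)})
    (hcover : ∀ v : V, v ∈ Set.range p ∨ ∃ i, v ∈ W i)
    (hedges : ∀ u v, D.Adj u v →
      (∃ (j : ℕ) (h : j + 1 < m),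
        (u = p ⟨j, Nat.lt_of_succ_lt h⟩ ∧ v = p ⟨j + 1, h⟩) ∨
        (v = p ⟨j, Nat.lt_of_succ_lt h⟩ ∧ u = p ⟨j + 1, h⟩)) ∨
      (∃ i, u ∈ W i ∧ v ∈ W i))
    (htree : ∀ i, (D.induce (W i)).IsTree)
    (hpw : ∀ i, pwLE (D.induce (W i)) c) :
    pwLE D (max 1 (c + 1)) := by
  classical
  choose mi βi hBcov hBedge hBcontig hBcard using hpw
  set N := (Finset.univ : Finset (Fin r)).sup mi with hNdef
  have hmiN : ∀ i, mi i ≤ N := fun i => Finset.le_sup (Finset.mem_univ i)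
  have hN1 : 0 < N + 1 := Nat.succ_pos N
  set q : ℕ → Finset V := fun j => if h : j < m then {p ⟨j, h⟩} else ∅ with hqdef
  set Bg : Fin r → ℕ → Finset V := fun i s =>
    if h : s < mi i then (βi i ⟨s, h⟩).image Subtype.val else ∅ with hBgdef
  set tb : ℕ → ℕ → Finset V := fun j s =>
    if h : ∃ i : Fin r, (a i : ℕ) = j then Bg h.choose s else ∅ with htbdef
  set B : Fin (m * (N + 1)) → Finset V := fun t =>
    q (t.val / (N + 1)) ∪
      (if t.val % (N + 1) = N then q (t.val / (N + 1) + 1)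
       else tb (t.val / (N + 1)) (t.val % (N + 1))) with hBdef
  -- helper lemmas about q
  have hq_mem : ∀ (v : V) (j : ℕ), v ∈ q j ↔ ∃ h : j < m, p ⟨j, h⟩ = v := by
    intro v j
    simp only [hqdef]
    split_ifs with h
    · constructor
      · intro hv; exact ⟨h, (Finset.mem_singleton.mp hv).symm⟩
      · rintro ⟨h', hv⟩; exact Finset.mem_singleton.mpr hv.symm
    · simp [h]
  have hq_card : ∀ j, (q j).card ≤ 1 := by
    intro j; simp only [hqdef]; split_ifs <;> simp
  have hq_range : ∀ v j, v ∈ q j → v ∈ Set.range p := by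
    intro v j hv
    obtain ⟨h, hpv⟩ := (hq_mem v j).mp hv
    exact ⟨_, hpv⟩
  -- helper lemmas about Bg
  have hBg_W : ∀ i s v, v ∈ Bg i s → v ∈ W i := by
    intro i s v hv
    simp only [hBgdef] at hv
    split_ifs at hv with h
    · obtain ⟨x, -, rfl⟩ := Finset.mem_image.mp hv
      exact x.2
    · simp at hv
  have hBg_mem : ∀ i s v (hv : v ∈ W i),
      (v ∈ Bg i s ↔ ∃ h : s < mi i, (⟨v, hv⟩ : W i) ∈ βi i ⟨s, h⟩) := by
    intro i s v hv
    simp only [hBgdef]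
    split_ifs with h
    · constructor
      · intro hmem
        obtain ⟨x, hx, hxv⟩ := Finset.mem_image.mp hmem
        refine ⟨h, ?_⟩
        have hxe : x = (⟨v, hv⟩ : W i) := Subtype.ext hxv
        rwa [hxe] at hx
      · rintro ⟨h', hx⟩
        exact Finset.mem_image.mpr ⟨⟨v, hv⟩, hx, rfl⟩
    · constructor
      · intro hmem; simp at hmem
      · rintro ⟨h', -⟩; exact absurd h' h
  have hBg_lt : ∀ i s v, v ∈ Bg i s → s < mi i := by
    intro i s v hv
    simp only [hBgdef] at hv
    split_ifs at hv with h
    · exact h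
    · simp at hv
  have hBg_card : ∀ i s, (Bg i s).card ≤ c + 1 := by
    intro i s
    simp only [hBgdef]
    split_ifs with h
    · exact le_trans (Finset.card_image_le) (hBcard i _)
    · simp
  -- helper lemmas about tb
  have htb_eq : ∀ (i : Fin r) (s : ℕ), tb ((a i : ℕ)) s = Bg i s := by
    intro i s
    have hex : ∃ i' : Fin r, (a i' : ℕ) = (a i : ℕ) := ⟨i, rfl⟩
    simp only [htbdef, dif_pos hex]
    have hce : hex.choose = i := ha (Fin.val_injective hex.choose_spec)
    rw [hce]
  have htb_sub : ∀ j s v, v ∈ tb j s → ∃ i : Fin r, (a i : ℕ) = j ∧ v ∈ Bg i s := by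
    intro j s v hv
    simp only [htbdef] at hv
    split_ifs at hv with h
    · exact ⟨h.choose, h.choose_spec, hv⟩
    · simp at hv
  have htb_card : ∀ j s, (tb j s).card ≤ c + 1 := by
    intro j s
    simp only [htbdef]
    split_ifs with h
    · exact hBg_card _ _
    · simp
  -- index helper
  have hidx : ∀ j0 s : ℕ, j0 < m → s ≤ N →
      ∃ t : Fin (m * (N + 1)), t.val / (N + 1) = j0 ∧ t.val % (N + 1) = s := by
    intro j0 s hj hs
    have hlt : s + j0 * (N + 1) < m * (N + 1) := by
      calc s + j0 * (N + 1) < (N + 1) + j0 * (N + 1) := by omega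
        _ = (j0 + 1) * (N + 1) := by ring
        _ ≤ m * (N + 1) := Nat.mul_le_mul_right _ hj
    refine ⟨⟨s + j0 * (N + 1), hlt⟩, ?_, ?_⟩
    · show (s + j0 * (N + 1)) / (N + 1) = j0
      rw [Nat.add_mul_div_right _ _ hN1, Nat.div_eq_of_lt (by omega)]
      omega
    · show (s + j0 * (N + 1)) % (N + 1) = s
      rw [Nat.add_mul_mod_self_right]
      exact Nat.mod_eq_of_lt (by omega)
  -- membership characterization
  have hmemB : ∀ (v : V) (t : Fin (m * (N + 1))), v ∈ B t ↔
      (v ∈ q (t.val / (N + 1)) ∨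
       (t.val % (N + 1) = N ∧ v ∈ q (t.val / (N + 1) + 1)) ∨
       (t.val % (N + 1) ≠ N ∧ v ∈ tb (t.val / (N + 1)) (t.val % (N + 1)))) := by
    intro v t
    simp only [hBdef, Finset.mem_union]
    split_ifs with h <;> tauto
  refine ⟨m * (N + 1), B, ?_, ?_, ?_, ?_⟩
  · -- cover
    intro v
    by_cases hv : v ∈ Set.range p
    · obtain ⟨j0, rfl⟩ := hv
      obtain ⟨t, hd, hsN⟩ := hidx j0.val N j0.isLt le_rfl
      refine ⟨t, (hmemB _ t).mpr (Or.inl ?_)⟩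
      rw [hd, hq_mem]
      exact ⟨j0.isLt, by rw [Fin.eta]⟩
    · obtain ⟨i, hvW⟩ := (hcover v).resolve_left hv
      obtain ⟨k, hk⟩ := hBcov i ⟨v, hvW⟩
      have hkN : k.val < N := lt_of_lt_of_le k.isLt (hmiN i)
      obtain ⟨t, hd, hs⟩ := hidx (a i).val k.val (a i).isLt (le_of_lt hkN)
      refine ⟨t, (hmemB _ t).mpr (Or.inr (Or.inr ⟨by rw [hs]; omega, ?_⟩))⟩
      rw [hd, hs, htb_eq]
      exact (hBg_mem i k.val v hvW).mpr ⟨k.isLt, by rw [Fin.eta]; exact hk⟩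
  · -- edges
    intro u v huv
    rcases hedges u v huv with ⟨j, h, hc⟩ | ⟨i, hu, hv⟩
    · obtain ⟨t, hd, hsN⟩ := hidx j N (Nat.lt_of_succ_lt h) le_rfl
      rcases hc with ⟨rfl, rfl⟩ | ⟨rfl, rfl⟩
      · refine ⟨t, (hmemB _ t).mpr (Or.inl ?_),
          (hmemB _ t).mpr (Or.inr (Or.inl ⟨hsN, ?_⟩))⟩
        · rw [hd, hq_mem]; exact ⟨Nat.lt_of_succ_lt h, rfl⟩
        · rw [hd, hq_mem]; exact ⟨h, rfl⟩
      · refine ⟨t, (hmemB _ t).mpr (Or.inr (Or.inl ⟨hsN, ?_⟩)),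
          (hmemB _ t).mpr (Or.inl ?_)⟩
        · rw [hd, hq_mem]; exact ⟨h, rfl⟩
        · rw [hd, hq_mem]; exact ⟨Nat.lt_of_succ_lt h, rfl⟩
    · have hadj : (D.induce (W i)).Adj ⟨u, hu⟩ ⟨v, hv⟩ := huv
      obtain ⟨k, hk1, hk2⟩ := hBedge i ⟨u, hu⟩ ⟨v, hv⟩ hadj
      have hkN : k.val < N := lt_of_lt_of_le k.isLt (hmiN i)
      obtain ⟨t, hd, hs⟩ := hidx (a i).val k.val (a i).isLt (le_of_lt hkN)
      refine ⟨t, (hmemB _ t).mpr (Or.inr (Or.inr ⟨by rw [hs]; omega, ?_⟩)),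
        (hmemB _ t).mpr (Or.inr (Or.inr ⟨by rw [hs]; omega, ?_⟩))⟩ <;>
        rw [hd, hs, htb_eq]
      · exact (hBg_mem i k.val u hu).mpr ⟨k.isLt, by rw [Fin.eta]; exact hk1⟩
      · exact (hBg_mem i k.val v hv).mpr ⟨k.isLt, by rw [Fin.eta]; exact hk2⟩
  · -- contiguity
    intro v t1 t2 t3 h12 h23 hv1 hv3
    replace hv1 := (hmemB v t1).mp hv1
    replace hv3 := (hmemB v t3).mp hv3
    refine (hmemB v t2).mpr ?_
    have ht12 : t1.val ≤ t2.val := h12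
    have ht23 : t2.val ≤ t3.val := h23
    have hd12 : t1.val / (N + 1) ≤ t2.val / (N + 1) := Nat.div_le_div_right ht12
    have hd23 : t2.val / (N + 1) ≤ t3.val / (N + 1) := Nat.div_le_div_right ht23
    have e1 := Nat.div_add_mod t1.val (N + 1)
    have e2 := Nat.div_add_mod t2.val (N + 1)
    have e3 := Nat.div_add_mod t3.val (N + 1)
    have m1 : t1.val % (N + 1) < N + 1 := Nat.mod_lt _ hN1
    have m2 : t2.val % (N + 1) < N + 1 := Nat.mod_lt _ hN1
    have m3 : t3.val % (N + 1) < N + 1 := Nat.mod_lt _ hN1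
    by_cases hv : v ∈ Set.range p
    · obtain ⟨j0, rfl⟩ := hv
      have key : ∀ t : Fin (m * (N + 1)),
          ((p j0 ∈ q (t.val / (N + 1)) ∨
           (t.val % (N + 1) = N ∧ p j0 ∈ q (t.val / (N + 1) + 1)) ∨
           (t.val % (N + 1) ≠ N ∧ p j0 ∈ tb (t.val / (N + 1)) (t.val % (N + 1))))) ↔
          (t.val / (N + 1) = j0.val ∨
           (t.val % (N + 1) = N ∧ t.val / (N + 1) + 1 = j0.val)) := by
        intro t
        constructor
        · rintro (h | ⟨hN', h⟩ | ⟨hN', h⟩)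
          · obtain ⟨hlt, hpe⟩ := (hq_mem _ _).mp h
            exact Or.inl (congrArg Fin.val (hp hpe))
          · obtain ⟨hlt, hpe⟩ := (hq_mem _ _).mp h
            exact Or.inr ⟨hN', congrArg Fin.val (hp hpe)⟩
          · obtain ⟨i, hai, hB⟩ := htb_sub _ _ _ h
            have hWi : p j0 ∈ W i := hBg_W _ _ _ hB
            have hmm : p j0 ∈ W i ∩ Set.range p := ⟨hWi, ⟨j0, rfl⟩⟩
            rw [hWpath i] at hmm
            have hj0 : j0 = a i := hp (Set.mem_singleton_iff.mp hmm)
            exact Or.inl (by rw [← hai, hj0])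
        · rintro (h | ⟨hN', h⟩)
          · have hlt : t.val / (N + 1) < m := by rw [h]; exact j0.isLt
            refine Or.inl ((hq_mem _ _).mpr ⟨hlt, ?_⟩)
            congr 1
            exact Fin.ext h
          · have hlt : t.val / (N + 1) + 1 < m := by rw [h]; exact j0.isLt
            refine Or.inr (Or.inl ⟨hN', (hq_mem _ _).mpr ⟨hlt, ?_⟩⟩)
            congr 1
            exact Fin.ext h
      rw [key] at hv1 hv3 ⊢
      generalize hgd1 : t1.val / (N + 1) = d1 at hv1 e1 hd12
      generalize hgd3 : t3.val / (N + 1) = d3 at hv3 e3 hd23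
      generalize hgd2 : t2.val / (N + 1) = d2 at e2 hd12 hd23 ⊢
      generalize hgs1 : t1.val % (N + 1) = s1 at hv1 e1 m1
      generalize hgs3 : t3.val % (N + 1) = s3 at hv3 e3 m3
      generalize hgs2 : t2.val % (N + 1) = s2 at e2 m2 ⊢
      rcases hv1 with k1 | ⟨s1N, k1⟩ <;> rcases hv3 with k3 | ⟨s3N, k3⟩
      · omega
      · omega
      · by_cases hd2 : d2 = j0.val
        · exact Or.inl hd2
        · have hd2' : d2 = d1 := by omega
          rw [hd2'] at e2
          generalize (N + 1) * d1 = X at e1 e2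
          omega
      · have hd13 : d1 = d3 := by omega
        have hd2' : d2 = d1 := by omega
        rw [hd2'] at e2
        rw [← hd13] at e3
        generalize (N + 1) * d1 = X at e1 e2 e3
        omega
    · obtain ⟨i, hvW⟩ := (hcover v).resolve_left hv
      have key : ∀ t : Fin (m * (N + 1)),
          ((v ∈ q (t.val / (N + 1)) ∨
           (t.val % (N + 1) = N ∧ v ∈ q (t.val / (N + 1) + 1)) ∨
           (t.val % (N + 1) ≠ N ∧ v ∈ tb (t.val / (N + 1)) (t.val % (N + 1))))) ↔
          (t.val / (N + 1) = (a i : ℕ) ∧ t.val % (N + 1) ≠ N ∧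
            v ∈ Bg i (t.val % (N + 1))) := by
        intro t
        constructor
        · rintro (h | ⟨hN', h⟩ | ⟨hN', h⟩)
          · exact absurd (hq_range _ _ h) hv
          · exact absurd (hq_range _ _ h) hv
          · obtain ⟨i', hai', hB⟩ := htb_sub _ _ _ h
            have hWi' : v ∈ W i' := hBg_W _ _ _ hB
            have hii : i' = i := by
              by_contra hne
              exact (Set.disjoint_left.mp (hdisj i' i hne) hWi') hvW
            subst hii
            exact ⟨hai'.symm, hN', hB⟩
        · rintro ⟨hd, hN', hB⟩
          exact Or.inr (Or.inr ⟨hN', by rw [hd, htb_eq]; exact hB⟩)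
      rw [key] at hv1 hv3 ⊢
      generalize hgd1 : t1.val / (N + 1) = d1 at hv1 e1 hd12
      generalize hgd3 : t3.val / (N + 1) = d3 at hv3 e3 hd23
      generalize hgd2 : t2.val / (N + 1) = d2 at e2 hd12 hd23 ⊢
      generalize hgs1 : t1.val % (N + 1) = s1 at hv1 e1 m1
      generalize hgs3 : t3.val % (N + 1) = s3 at hv3 e3 m3
      generalize hgs2 : t2.val % (N + 1) = s2 at e2 m2 ⊢
      obtain ⟨hd1, s1N, hB1⟩ := hv1
      obtain ⟨hd3, s3N, hB3⟩ := hv3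
      have hd2 : d2 = (a i : ℕ) := by omega
      rw [hd1] at e1
      rw [hd2] at e2
      rw [hd3] at e3
      generalize (N + 1) * ((a i : ℕ)) = X at e1 e2 e3
      have hs12 : s1 ≤ s2 := by omega
      have hs23 : s2 ≤ s3 := by omega
      have hlt1 := hBg_lt _ _ _ hB1
      have hlt3 := hBg_lt _ _ _ hB3
      have hlt2 : s2 < mi i := lt_of_le_of_lt hs23 hlt3
      have hmN := hmiN i
      refine ⟨hd2, by omega, ?_⟩
      rw [hBg_mem i _ v hvW]
      refine ⟨hlt2, ?_⟩
      obtain ⟨h1', hm1'⟩ := (hBg_mem i s1 v hvW).mp hB1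
      obtain ⟨h3', hm3'⟩ := (hBg_mem i s3 v hvW).mp hB3
      exact hBcontig i ⟨v, hvW⟩ ⟨s1, h1'⟩ ⟨s2, hlt2⟩ ⟨s3, h3'⟩
        (Fin.mk_le_mk.mpr hs12) (Fin.mk_le_mk.mpr hs23) hm1' hm3'
  · -- cards
    intro t
    simp only [hBdef]
    refine le_trans (Finset.card_union_le _ _) ?_
    have h1 := hq_card (t.val / (N + 1))
    have hmax1 : 1 ≤ max 1 (c + 1) := le_max_left _ _
    have hmax2 : c + 1 ≤ max 1 (c + 1) := le_max_right _ _
    split_ifs with h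
    · have h2 := hq_card (t.val / (N + 1) + 1)
      omega
    · have h2 := htb_card (t.val / (N + 1)) (t.val % (N + 1))
      omega
end

section
/- Let ℓ ≥ 1 and define weights w_t = 2^{t-1} + 2^{2ℓ-t} for t ∈ {1,…,ℓ}. Suppose a finite multiset M of elements, each either of weight 0 or of weight w_t for some t ∈ {1,…,ℓ}, has total weight exactly 2^{2ℓ} − 1. Then for every t ∈ {1,…,ℓ}, the multiset M contains exactly one element of weight w_t. -/
lemma stmt3_aux (n : ℕ) : ∀ (c : ℕ → ℕ),
    (∑ i ∈ Finset.range n, c i * (2 ^ i + 2 ^ (2 * n - 1 - i)) = 2 ^ (2 * n) - 1) →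
    ∀ i < n, c i = 1 := by
  induction n with
  | zero => intro c h i hi; omega
  | succ n ih =>
    intro c h i hi
    rw [Finset.sum_range_succ'] at h
    have key : ∀ j ∈ Finset.range n,
        c (j + 1) * (2 ^ (j + 1) + 2 ^ (2 * (n + 1) - 1 - (j + 1)))
        = 2 * (c (j + 1) * (2 ^ j + 2 ^ (2 * n - 1 - j))) := by
      intro j hj
      simp only [Finset.mem_range] at hj
      have e : 2 * (n + 1) - 1 - (j + 1) = (2 * n - 1 - j) + 1 := by omega
      rw [e, pow_succ, pow_succ]
      ring
    rw [Finset.sum_congr rfl key, ← Finset.mul_sum] at h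
    set S := ∑ j ∈ Finset.range n, c (j + 1) * (2 ^ j + 2 ^ (2 * n - 1 - j)) with hS
    set B := (2 : ℕ) ^ (2 * n) with hB
    have hB1 : 1 ≤ B := Nat.one_le_two_pow
    have e1 : (2 : ℕ) ^ (2 * (n + 1)) = 4 * B := by
      rw [hB, show 2 * (n + 1) = 2 * n + 2 by ring, pow_add]; ring
    have e2 : 2 * (n + 1) - 1 - 0 = 2 * n + 1 := by omega
    have e3 : (2 : ℕ) ^ (2 * n + 1) = 2 * B := by rw [hB, pow_succ]; ring
    rw [e1, e2, e3, pow_zero] at h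
    have hx : c 0 * (1 + 2 * B) = c 0 + 2 * (c 0 * B) := by ring
    rw [hx] at h
    have hc0 : c 0 = 1 := by
      have hle : c 0 ≤ 2 := by
        by_contra hgt
        push_neg at hgt
        have h3 : 3 * B ≤ c 0 * B := Nat.mul_le_mul_right B (by omega)
        omega
      omega
    rcases i with _ | j
    · exact hc0
    · rw [hc0, one_mul] at h
      have hS' : S = 2 ^ (2 * n) - 1 := by rw [← hB]; omega
      exact ih (fun j => c (j + 1)) hS' j (by omega)

/-- Key arithmetic claim of Lemma 3.2: if a multiset with `c t` elements of weight
`2^(t-1) + 2^(2ℓ-t)` for each `t ∈ {1,…,ℓ}` (and possibly elements of weight 0)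
has total weight exactly `2^(2ℓ) − 1`, then `c t = 1` for every `t`. -/
theorem stmt3 (ℓ : ℕ) (hℓ : 1 ≤ ℓ) (c : ℕ → ℕ)
    (h : ∑ t ∈ Finset.Icc 1 ℓ, c t * (2 ^ (t - 1) + 2 ^ (2 * ℓ - t))
        = 2 ^ (2 * ℓ) - 1) :
    ∀ t ∈ Finset.Icc 1 ℓ, c t = 1 := by
  rw [← Finset.Ico_add_one_right_eq_Icc, Finset.sum_Ico_eq_sum_range] at h
  have h' : ∑ i ∈ Finset.range ℓ, c (i + 1) * (2 ^ i + 2 ^ (2 * ℓ - 1 - i))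
      = 2 ^ (2 * ℓ) - 1 := by
    rw [← h]
    apply Finset.sum_congr rfl
    intro i hi
    simp only [Finset.mem_range] at hi
    have e : 2 * ℓ - (1 + i) = 2 * ℓ - 1 - i := by omega
    rw [add_comm 1 i, Nat.succ_sub_one] at *
    rw [e]
  intro t ht
  simp only [Finset.mem_Icc] at ht
  obtain ⟨h1, h2⟩ := ht
  have := stmt3_aux ℓ (fun i => c (i + 1)) h' (t - 1) (by omega)
  have e : t - 1 + 1 = t := by omega
  rw [← e]
  exact this
end

section
/- Let H be a graph with maximum degree at most 2 whose connected components are all paths, with component vertex-counts a₁,…,a_p, and let G be a graph with maximum degree at most 2 with component vertex-counts b₁,…,b_r (each component a path or cycle). Then there is an injective graph homomorphism (subgraph embedding) from H into G if and only if there is a function f : {1,…,p} → {1,…,r} such that for every j ∈ {1,…,r}, Σ_{i : f(i)=j} a_i ≤ b_j. -/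
/-! Each path of `H` is connected, so an embedding maps it into a single component of `G`,
and injectivity bounds the total size of the paths landing in component `j` by `b j`.
Conversely, given a packing `f`, lay the paths assigned to component `j` one after another
along its vertices `0, 1, …, b j - 1`; the path edges of the component suffice, so cycles
play no special role. -/

/-- `H`: disjoint union of paths with `a i` vertices, `i : Fin p`. -/
def pathsGraph (p : ℕ) (a : Fin p → ℕ) : SimpleGraph (Σ i : Fin p, Fin (a i)) :=
  SimpleGraph.fromRel (fun x y => x.1 = y.1 ∧ (x.2 : ℕ) + 1 = (y.2 : ℕ))

/-- `G`: disjoint union of components with `b j` vertices, `j : Fin r`, where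
component `j` is a cycle if `cyc j = true` (closing edge from last to first vertex)
and a path otherwise. -/
def pathsCyclesGraph (r : ℕ) (b : Fin r → ℕ) (cyc : Fin r → Bool) :
    SimpleGraph (Σ j : Fin r, Fin (b j)) :=
  SimpleGraph.fromRel (fun x y => x.1 = y.1 ∧
    ((x.2 : ℕ) + 1 = (y.2 : ℕ) ∨
      (cyc x.1 = true ∧ (x.2 : ℕ) + 1 = b x.1 ∧ (y.2 : ℕ) = 0)))

open Finset

section Packing

variable {ι κ : Type*} [Fintype ι] [LinearOrder ι] [DecidableEq κ] (f : ι → κ) (a : ι → ℕ)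

/-- The position at which item `i` starts when the items assigned to `f i` are laid out
consecutively in the order of `ι`. -/
def packOffset (i : ι) : ℕ :=
  ∑ i' ∈ univ.filter (fun i' => f i' = f i ∧ i' < i), a i'

lemma packOffset_add_self (i : ι) :
    packOffset f a i + a i = ∑ i' ∈ univ.filter (fun i' => f i' = f i ∧ i' ≤ i), a i' := by
  have hinsert : univ.filter (fun i' => f i' = f i ∧ i' ≤ i) =
      insert i (univ.filter (fun i' => f i' = f i ∧ i' < i)) := by
    ext i'
    simp only [mem_filter, mem_univ, true_and, mem_insert]
    grind
  rw [hinsert, sum_insert (by simp), add_comm]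
  rfl

lemma packOffset_add_self_le_sum (i : ι) :
    packOffset f a i + a i ≤ ∑ i' ∈ univ.filter (fun i' => f i' = f i), a i' := by
  rw [packOffset_add_self]
  exact sum_le_sum_of_subset (monotone_filter_right _ fun _ _ h => h.1)

lemma packOffset_add_self_le_of_lt {i i' : ι} (hlt : i < i') (hf : f i = f i') :
    packOffset f a i + a i ≤ packOffset f a i' := by
  rw [packOffset_add_self]
  refine sum_le_sum_of_subset (monotone_filter_right _ fun _ _ h => ?_)
  exact ⟨h.1.trans hf, h.2.trans_lt hlt⟩

end Packing

section Graphs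

variable {p r : ℕ} {a : Fin p → ℕ} {b : Fin r → ℕ} {cyc : Fin r → Bool}

lemma pathsGraph_adj_iff {x y : Σ i : Fin p, Fin (a i)} :
    (pathsGraph p a).Adj x y ↔
      x.1 = y.1 ∧ ((x.2 : ℕ) + 1 = y.2 ∨ (y.2 : ℕ) + 1 = x.2) := by
  rw [pathsGraph, SimpleGraph.fromRel_adj]
  constructor
  · rintro ⟨-, ⟨h1, h2⟩ | ⟨h1, h2⟩⟩
    exacts [⟨h1, Or.inl h2⟩, ⟨h1.symm, Or.inr h2⟩]
  · rintro ⟨h1, h2 | h2⟩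
    · exact ⟨fun h => by subst h; omega, Or.inl ⟨h1, h2⟩⟩
    · exact ⟨fun h => by subst h; omega, Or.inr ⟨h1.symm, h2⟩⟩

lemma pathsCyclesGraph_adj_of_succ {x y : Σ j : Fin r, Fin (b j)}
    (h1 : x.1 = y.1) (h2 : (x.2 : ℕ) + 1 = y.2) : (pathsCyclesGraph r b cyc).Adj x y := by
  rw [pathsCyclesGraph, SimpleGraph.fromRel_adj]
  exact ⟨fun h => by subst h; omega, Or.inl ⟨h1, Or.inl h2⟩⟩

lemma pathsCyclesGraph_adj_fst {x y : Σ j : Fin r, Fin (b j)}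
    (h : (pathsCyclesGraph r b cyc).Adj x y) : x.1 = y.1 := by
  rw [pathsCyclesGraph, SimpleGraph.fromRel_adj] at h
  rcases h.2 with ⟨h1, -⟩ | ⟨h1, -⟩
  exacts [h1, h1.symm]

lemma fst_hom_eq_fst_hom_zero {η : (Σ i : Fin p, Fin (a i)) → (Σ j : Fin r, Fin (b j))}
    (hη : ∀ x y, (pathsGraph p a).Adj x y → (pathsCyclesGraph r b cyc).Adj (η x) (η y))
    (i : Fin p) (h0 : 0 < a i) (k : ℕ) (hk : k < a i) :
    (η ⟨i, ⟨k, hk⟩⟩).1 = (η ⟨i, ⟨0, h0⟩⟩).1 := by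
  induction k with
  | zero => rfl
  | succ k ih =>
    have hadj : (pathsGraph p a).Adj ⟨i, ⟨k, by omega⟩⟩ ⟨i, ⟨k + 1, hk⟩⟩ :=
      pathsGraph_adj_iff.2 ⟨rfl, Or.inl rfl⟩
    rw [← pathsCyclesGraph_adj_fst (hη _ _ hadj), ih]

lemma exists_packing_of_hom (ha : ∀ i, 1 ≤ a i)
    {η : (Σ i : Fin p, Fin (a i)) → (Σ j : Fin r, Fin (b j))} (hinj : Function.Injective η)
    (hη : ∀ x y, (pathsGraph p a).Adj x y → (pathsCyclesGraph r b cyc).Adj (η x) (η y)) :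
    ∃ f : Fin p → Fin r, ∀ j, ∑ i ∈ univ.filter (fun i => f i = j), a i ≤ b j := by
  refine ⟨fun i => (η ⟨i, ⟨0, ha i⟩⟩).1, fun j => ?_⟩
  have hmaps : ∀ x ∈ (univ.filter fun i => (η ⟨i, ⟨0, ha i⟩⟩).1 = j).sigma fun i => univ,
      η x ∈ ({j} : Finset (Fin r)).sigma fun j => univ := by
    rintro ⟨i, k, hk⟩ hx
    simp only [mem_sigma, mem_filter, mem_univ, true_and, and_true] at hx
    simp [fst_hom_eq_fst_hom_zero hη i (ha i) k hk, hx]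
  have hcard := card_le_card_of_injOn η hmaps hinj.injOn
  simpa only [card_sigma, sum_singleton, card_univ, Fintype.card_fin]
    using hcard

lemma exists_hom_of_packing {f : Fin p → Fin r}
    (hf : ∀ j, ∑ i ∈ univ.filter (fun i => f i = j), a i ≤ b j) :
    ∃ η : (Σ i : Fin p, Fin (a i)) → (Σ j : Fin r, Fin (b j)),
      Function.Injective η ∧
      ∀ x y, (pathsGraph p a).Adj x y → (pathsCyclesGraph r b cyc).Adj (η x) (η y) := by
  have hfits (x : Σ i : Fin p, Fin (a i)) : packOffset f a x.1 + x.2 < b (f x.1) := by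
    have := packOffset_add_self_le_sum f a x.1
    have := hf (f x.1)
    omega
  refine ⟨fun x => ⟨f x.1, packOffset f a x.1 + x.2, hfits x⟩, ?_, ?_⟩
  · rintro ⟨i, k⟩ ⟨i', k'⟩ h
    have hfst : f i = f i' := congrArg Sigma.fst h
    have hsnd : packOffset f a i + k = packOffset f a i' + k' :=
      congrArg (fun z : Σ j : Fin r, Fin (b j) => (z.2 : ℕ)) h
    rcases lt_trichotomy i i' with hlt | rfl | hlt
    · have := packOffset_add_self_le_of_lt f a hlt hfst
      omega
    · rw [Fin.ext (by omega : (k : ℕ) = k')]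
    · have := packOffset_add_self_le_of_lt f a hlt hfst.symm
      omega
  · rintro ⟨i, k⟩ ⟨i', k'⟩ hxy
    obtain ⟨hi : i = i', hsucc | hsucc⟩ := pathsGraph_adj_iff.1 hxy
    · subst hi
      exact pathsCyclesGraph_adj_of_succ rfl (by dsimp only at hsucc ⊢; omega)
    · subst hi
      apply SimpleGraph.Adj.symm
      exact pathsCyclesGraph_adj_of_succ rfl (by dsimp only at hsucc ⊢; omega)

end Graphs

theorem stmt4_general (p r : ℕ) (a : Fin p → ℕ) (b : Fin r → ℕ) (cyc : Fin r → Bool)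
    (ha : ∀ i, 1 ≤ a i) :
    (∃ η : (Σ i : Fin p, Fin (a i)) → (Σ j : Fin r, Fin (b j)),
      Function.Injective η ∧
      ∀ x y, (pathsGraph p a).Adj x y →
        (pathsCyclesGraph r b cyc).Adj (η x) (η y)) ↔
    (∃ f : Fin p → Fin r, ∀ j,
      ∑ i ∈ Finset.univ.filter (fun i => f i = j), a i ≤ b j) :=
  ⟨fun ⟨_, hinj, hη⟩ => exists_packing_of_hom ha hinj hη,
    fun ⟨_, hf⟩ => exists_hom_of_packing hf⟩

/-- Theorem 4.5 (bin-packing correspondence): a disjoint union of paths `H`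
embeds into a disjoint union of paths and cycles `G` iff the path sizes can be
assigned to components without exceeding the component sizes. -/
theorem stmt4 (p r : ℕ) (a : Fin p → ℕ) (b : Fin r → ℕ) (cyc : Fin r → Bool)
    (ha : ∀ i, 1 ≤ a i) (hb : ∀ j, 1 ≤ b j)
    (hcyc : ∀ j, cyc j = true → 3 ≤ b j) :
    (∃ η : (Σ i : Fin p, Fin (a i)) → (Σ j : Fin r, Fin (b j)),
      Function.Injective η ∧
      ∀ x y, (pathsGraph p a).Adj x y →
        (pathsCyclesGraph r b cyc).Adj (η x) (η y)) ↔
    (∃ f : Fin p → Fin r, ∀ j,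
      ∑ i ∈ Finset.univ.filter (fun i => f i = j), a i ≤ b j) :=
  stmt4_general p r a b cyc ha
end

section
/- Let G be a connected graph and Z ⊆ V(G) a set such that every connected component of G − Z is a tree, there are at most two edges between each component of G − Z and Z, and every vertex of Z is adjacent to at most one vertex of each component. Suppose additionally every vertex of Z has degree at most 2 in G. Then every connected component of G contains at most one cycle. -/
/-!
Every vertex of `Z` has degree at most 2, and every component `T` of `G − Z` is a tree with at most
two edges to `Z`, so the degrees in `T` sum to at most `2 (|T| - 1) + 2 = 2 |T|`. Summing over the
components of `G − Z` and the vertices of `Z` gives `|E(G)| ≤ |V(G)|`. A connected graph containing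
a cycle has at least as many edges as vertices; so if an edge of one cycle avoided another cycle,
deleting it would leave a connected graph containing a cycle with fewer edges than vertices.
-/

open Finset

/-- `C` is a connected component of `G − Z`. -/
def IsCompAvoid {V : Type*} (G : SimpleGraph V) (Z C : Set V) : Prop :=
  C.Nonempty ∧ (∀ v ∈ C, v ∉ Z) ∧ (G.induce C).Connected ∧
    ∀ u ∈ C, ∀ v, v ∉ Z → G.Adj u v → v ∈ C

namespace SimpleGraph

variable {V : Type*} {G : SimpleGraph V}

lemma Connected.card_le_card_edgeSet_of_not_isAcyclic [Finite V] (hG : G.Connected)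
    (hG' : ¬G.IsAcyclic) : Nat.card V ≤ Nat.card G.edgeSet := by
  have hne : Nat.card G.edgeSet + 1 ≠ Nat.card V := fun h =>
    hG' (isTree_iff_connected_and_card.2 ⟨hG, h⟩).isAcyclic
  have := hG.card_vert_le_card_edgeSet_add_one
  omega

lemma Connected.edges_subset_of_isCycle_of_card_edgeSet_le [Finite V] (hG : G.Connected)
    (hE : Nat.card G.edgeSet ≤ Nat.card V) {u v : V} {c₁ : G.Walk u u} {c₂ : G.Walk v v}
    (h₁ : c₁.IsCycle) (h₂ : c₂.IsCycle) : c₁.edges ⊆ c₂.edges := by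
  intro e he₁
  by_contra he₂
  induction e using Sym2.ind with | _ x y =>
  have hG' : (G.deleteEdges {s(x, y)}).Connected := hG.connected_delete_edge_of_not_isBridge
    fun hb => (isBridge_iff_forall_cycle_notMem (c₁.edges_subset_edgeSet he₁)).1 hb c₁ h₁ he₁
  have hc₂ : ∀ e ∈ c₂.edges, e ∈ (G.deleteEdges {s(x, y)}).edgeSet := fun e he => by
    rw [edgeSet_deleteEdges]
    exact ⟨c₂.edges_subset_edgeSet he, by rintro rfl; exact he₂ he⟩
  have hlt : Nat.card (G.deleteEdges {s(x, y)}).edgeSet < Nat.card G.edgeSet := by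
    simp only [edgeSet_deleteEdges, Nat.card_coe_set_eq]
    exact Set.ncard_sdiff_singleton_lt_of_mem (c₁.edges_subset_edgeSet he₁)
  have := hG'.card_le_card_edgeSet_of_not_isAcyclic fun hac => hac _ (h₂.transfer hc₂)
  omega

section Degrees

variable [Fintype V] [DecidableEq V] [DecidableRel G.Adj]

lemma sum_degree_eq_two_mul_card_edgeFinset_induce_add_card_interedges (s : Finset V) :
    ∑ v ∈ s, G.degree v = 2 * #(G.induce (s : Set V)).edgeFinset + #(G.interedges s sᶜ) := by
  have hinside : ∑ v ∈ s, #(G.neighborFinset v ∩ s) = 2 * #(G.induce (s : Set V)).edgeFinset := by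
    rw [← sum_degrees_eq_twice_card_edges, ← sum_coe_sort s]
    refine sum_congr rfl fun v _ => ?_
    convert (congrArg card (G.map_neighborFinset_induce (s := ↑s) v)).symm using 1
    · rw [toFinset_coe]
    · rw [card_map, card_neighborFinset_eq_degree]
      congr!
  have hboundary : ∑ v ∈ s, #(G.neighborFinset v \ s) = #(G.interedges s sᶜ) := by
    rw [interedges, Rel.interedges_eq_biUnion, card_biUnion]
    · refine sum_congr rfl fun v _ => ?_
      rw [card_map]
      congr 1
      ext w
      simp [and_comm]
    · intro v _ w _ hvw
      refine Finset.disjoint_left.2 ?_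
      simp only [mem_map, Function.Embedding.coeFn_mk]
      rintro _ ⟨_, _, rfl⟩ ⟨_, _, h⟩
      exact hvw (congrArg Prod.fst h).symm
  rw [← hinside, ← hboundary, ← sum_add_distrib]
  refine sum_congr rfl fun v _ => ?_
  rw [card_inter_add_card_sdiff, card_neighborFinset_eq_degree]

lemma sum_degree_le_two_mul_card_of_isTree_induce {s : Finset V}
    (hs : (G.induce (s : Set V)).IsTree) (hb : #(G.interedges s sᶜ) ≤ 2) :
    ∑ v ∈ s, G.degree v ≤ 2 * #s := by
  have := hs.card_edgeFinset
  rw [← Nat.card_eq_fintype_card, Nat.card_coe_set_eq, Set.ncard_coe_finset] at this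
  rw [sum_degree_eq_two_mul_card_edgeFinset_induce_add_card_interedges]
  omega

end Degrees

/-- Its connected components are those of `G − Z` together with the singletons of `Z`. -/
def isolate (G : SimpleGraph V) (Z : Set V) : SimpleGraph V where
  Adj u v := G.Adj u v ∧ u ∉ Z ∧ v ∉ Z
  symm := ⟨fun _ _ h => ⟨h.1.symm, h.2.2, h.2.1⟩⟩
  loopless := ⟨fun _ h => G.loopless.irrefl _ h.1⟩

variable {Z : Set V}

@[simp]
lemma isolate_adj {u v : V} : (G.isolate Z).Adj u v ↔ G.Adj u v ∧ u ∉ Z ∧ v ∉ Z := Iff.rfl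

lemma isolate_le : G.isolate Z ≤ G := fun _ _ h => (isolate_adj.1 h).1

namespace ConnectedComponent

lemma supp_eq_singleton_of_mem (κ : (G.isolate Z).ConnectedComponent) {z : V} (hz : z ∈ Z)
    (hzκ : z ∈ κ.supp) : κ.supp = {z} := by
  refine Set.eq_singleton_iff_unique_mem.2 ⟨hzκ, fun v hv => ?_⟩
  obtain ⟨p⟩ := κ.reachable_of_mem_supp hzκ hv
  cases p with
  | nil => rfl
  | cons h _ => exact absurd hz (isolate_adj.1 h).2.1

lemma connected_induce_supp (κ : (G.isolate Z).ConnectedComponent) :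
    (G.induce κ.supp).Connected :=
  κ.connected_toSimpleGraph.mono fun _ _ h => isolate_le h

lemma isCompAvoid_supp (κ : (G.isolate Z).ConnectedComponent) (hκ : κ.supp ⊆ Zᶜ) :
    IsCompAvoid G Z κ.supp :=
  ⟨κ.nonempty_supp, hκ, κ.connected_induce_supp, fun _ hu _ hv huv =>
    κ.mem_supp_of_adj_mem_supp hu (isolate_adj.2 ⟨huv, hκ hu, hv⟩)⟩

lemma isTree_induce_supp (hforest : (G.induce Zᶜ).IsAcyclic)
    (κ : (G.isolate Z).ConnectedComponent) (hκ : κ.supp ⊆ Zᶜ) : (G.induce κ.supp).IsTree :=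
  ⟨κ.connected_induce_supp, hforest.embedding (G.induceHomOfLE hκ)⟩

end ConnectedComponent

end SimpleGraph

open SimpleGraph

section

variable {V : Type*} [Fintype V] {G : SimpleGraph V} {Z : Set V}

lemma sum_degree_le_two_mul_card_of_coe_eq_supp [DecidableEq V] [DecidableRel G.Adj]
    (hforest : (G.induce Zᶜ).IsAcyclic)
    (hedges : ∀ C : Set V, IsCompAvoid G Z C →
      Set.ncard {p : V × V | p.1 ∈ C ∧ p.2 ∈ Z ∧ G.Adj p.1 p.2} ≤ 2)
    (hdeg : ∀ z ∈ Z, (G.neighborSet z).ncard ≤ 2)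
    (κ : (G.isolate Z).ConnectedComponent) (s : Finset V) (hs : (s : Set V) = κ.supp) :
    ∑ v ∈ s, G.degree v ≤ 2 * #s := by
  classical
  by_cases hZ : ∃ z ∈ Z, z ∈ κ.supp
  · obtain ⟨z, hz, hzκ⟩ := hZ
    rw [κ.supp_eq_singleton_of_mem hz hzκ, coe_eq_singleton] at hs
    subst hs
    rw [sum_singleton, card_singleton, ← card_neighborFinset_eq_degree, ← Set.ncard_coe_finset,
      coe_neighborFinset]
    exact hdeg z hz
  · have hκ : κ.supp ⊆ Zᶜ := fun v hv hvZ => hZ ⟨v, hvZ, hv⟩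
    have hboundary : G.interedges s sᶜ ⊆ G.interedges s Z.toFinset := by
      intro p hp
      rw [mem_interedges_iff, mem_compl] at hp
      rw [mem_interedges_iff, Set.mem_toFinset]
      refine ⟨hp.1, ?_, hp.2.2⟩
      by_contra hpZ
      have h1 : p.1 ∈ κ.supp := hs ▸ hp.1
      exact hp.2.1 (Finset.mem_coe.1 (hs ▸ κ.mem_supp_of_adj_mem_supp h1
        (isolate_adj.2 ⟨hp.2.2, hκ h1, hpZ⟩)))
    have hcoe : (G.interedges s Z.toFinset : Set (V × V)) =
        {p : V × V | p.1 ∈ κ.supp ∧ p.2 ∈ Z ∧ G.Adj p.1 p.2} := by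
      ext p
      simp [mem_interedges_iff, ← hs]
    refine sum_degree_le_two_mul_card_of_isTree_induce (hs ▸ κ.isTree_induce_supp hforest hκ) ?_
    calc #(G.interedges s sᶜ) ≤ #(G.interedges s Z.toFinset) := card_le_card hboundary
      _ ≤ 2 := by
        rw [← Set.ncard_coe_finset, hcoe]
        exact hedges _ (κ.isCompAvoid_supp hκ)

lemma card_edgeSet_le_card (hforest : (G.induce Zᶜ).IsAcyclic)
    (hedges : ∀ C : Set V, IsCompAvoid G Z C →
      Set.ncard {p : V × V | p.1 ∈ C ∧ p.2 ∈ Z ∧ G.Adj p.1 p.2} ≤ 2)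
    (hdeg : ∀ z ∈ Z, (G.neighborSet z).ncard ≤ 2) :
    Nat.card G.edgeSet ≤ Nat.card V := by
  classical
  let K := G.isolate Z
  have hsum : ∑ v, G.degree v ≤ 2 * Fintype.card V :=
    calc ∑ v, G.degree v = ∑ κ, ∑ v with K.connectedComponentMk v = κ, G.degree v :=
          (sum_fiberwise _ _ _).symm
      _ ≤ ∑ κ, 2 * #{v | K.connectedComponentMk v = κ} := sum_le_sum fun κ _ =>
          sum_degree_le_two_mul_card_of_coe_eq_supp hforest hedges hdeg κ _ (by ext; simp [K])
      _ = 2 * Fintype.card V := by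
          rw [← mul_sum, ← card_univ, card_eq_sum_card_fiberwise (f := K.connectedComponentMk)
            fun _ _ => mem_univ _]
  rw [sum_degrees_eq_twice_card_edges] at hsum
  rw [Nat.card_eq_fintype_card, ← edgeFinset_card, Nat.card_eq_fintype_card]
  omega

end

theorem stmt6_general {V : Type*} [Fintype V] (G : SimpleGraph V) (hG : G.Connected)
    (Z : Set V)
    (hforest : (G.induce Zᶜ).IsAcyclic)
    (hedges : ∀ C : Set V, IsCompAvoid G Z C →
      Set.ncard {p : V × V | p.1 ∈ C ∧ p.2 ∈ Z ∧ G.Adj p.1 p.2} ≤ 2)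
    (hdeg : ∀ z ∈ Z, (G.neighborSet z).ncard ≤ 2) :
    ∀ (u v : V) (c₁ : G.Walk u u) (c₂ : G.Walk v v),
      c₁.IsCycle → c₂.IsCycle → ∀ e, e ∈ c₁.edges ↔ e ∈ c₂.edges := by
  intro u v c₁ c₂ h₁ h₂ e
  have hE := card_edgeSet_le_card hforest hedges hdeg
  exact ⟨fun he => hG.edges_subset_of_isCycle_of_card_edgeSet_le hE h₁ h₂ he,
    fun he => hG.edges_subset_of_isCycle_of_card_edgeSet_le hE h₂ h₁ he⟩

/-- Claim 4.3: let `G` be connected and `Z ⊆ V(G)` be such that every component of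
`G − Z` is a tree, there are at most two edges between each component and `Z`, and
every vertex of `Z` is adjacent to at most one vertex of each component. If moreover
every vertex of `Z` has degree at most 2 in `G`, then `G` (being connected, its
unique component) contains at most one cycle: any two cycles have the same edges. -/
theorem stmt6 {V : Type*} [Fintype V] (G : SimpleGraph V) (hG : G.Connected)
    (Z : Set V)
    (hforest : (G.induce Zᶜ).IsAcyclic)
    (hedges : ∀ C : Set V, IsCompAvoid G Z C →
      Set.ncard {p : V × V | p.1 ∈ C ∧ p.2 ∈ Z ∧ G.Adj p.1 p.2} ≤ 2)
    (hone : ∀ z ∈ Z, ∀ C : Set V, IsCompAvoid G Z C →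
      ∀ u ∈ C, ∀ v ∈ C, G.Adj z u → G.Adj z v → u = v)
    (hdeg : ∀ z ∈ Z, (G.neighborSet z).ncard ≤ 2) :
    ∀ (u v : V) (c₁ : G.Walk u u) (c₂ : G.Walk v v),
      c₁.IsCycle → c₂.IsCycle → ∀ e, e ∈ c₁.edges ↔ e ∈ c₂.edges :=
  stmt6_general G hG Z hforest hedges hdeg
end

section
/- In the arc gadget of Lemma 7.14: let M ≥ 2, S ⊆ {1,…,M−1}×{1,…,M−1} with x + y = M for all (x,y) ∈ S. Construct a graph H on vertex set {κ₁, κ₂, λ₁, λ₂} ∪ {q₁,…,q_{2M}}, with path edges q_j q_{j+1} for 1 ≤ j < 2M, edges κ₁q₁ and λ₁q_{2M}, and for each (x,y) ∈ S the edges q_{2x}κ₂ and q_{2x+1}λ₂. Then for any pair of vertex-disjoint paths P₁ from κ₁ to κ₂ and P₂ from λ₁ to λ₂ that together cover all vertices of H, there exists (x,y) ∈ S with P₁ having length 2x+1 and P₂ having length 2y+1; conversely, for every (x,y) ∈ S such a covering pair of paths of those lengths exists. -/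
/-- The base relation of the arc gadget of Lemma 7.14. Vertices: `Sum.inl 0 = κ₁`,
`Sum.inl 1 = κ₂`, `Sum.inl 2 = λ₁`, `Sum.inl 3 = λ₂`, and `Sum.inr j` is the path
vertex `q_{j+1}` (0-indexed). -/
def arcRel (M : ℕ) (S : Set (ℕ × ℕ)) :
    (Fin 4 ⊕ Fin (2 * M)) → (Fin 4 ⊕ Fin (2 * M)) → Prop
  | Sum.inr j, Sum.inr j' => (j : ℕ) + 1 = (j' : ℕ)
  | Sum.inl a, Sum.inr j =>
      (a = 0 ∧ (j : ℕ) = 0) ∨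
      (a = 2 ∧ (j : ℕ) = 2 * M - 1) ∨
      (a = 1 ∧ ∃ x y, (x, y) ∈ S ∧ (j : ℕ) = 2 * x - 1) ∨
      (a = 3 ∧ ∃ x y, (x, y) ∈ S ∧ (j : ℕ) = 2 * x)
  | _, _ => False

/-- The arc gadget graph `H` of Lemma 7.14. -/
def arcGadget (M : ℕ) (S : Set (ℕ × ℕ)) : SimpleGraph (Fin 4 ⊕ Fin (2 * M)) :=
  SimpleGraph.fromRel (arcRel M S)

open SimpleGraph

/-!
A path starting at κ₁ enters the spine q₁ … q_{2M} at q₁, and a path that avoids the other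
terminals and the part of the spine behind it can only run monotonically along the spine until it
leaves for κ₂ (from some q_{2x}) or for λ₂ (from some q_{2x'+1}). So the two paths have lengths
2x + 1 and 2(M - x') + 1. Two paths whose supports cover the 2M + 4 vertices are vertex-disjoint
paths exactly when their lengths add up to 2M + 2: this forces x = x', and conversely it makes
the obvious monotone paths vertex-disjoint for free.
-/

theorem List.nodup_iff_length_eq_card_of_forall_mem {α : Type*} [Fintype α] {l : List α}
    (hl : ∀ a, a ∈ l) : l.Nodup ↔ l.length = Fintype.card α := by
  classical
  have huniv : l.toFinset = Finset.univ := Finset.eq_univ_of_forall (by simpa using hl)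
  rw [← Multiset.coe_nodup, ← Multiset.toFinset_card_eq_card_iff_nodup]
  change l.toFinset.card = l.length ↔ _
  rw [huniv, Finset.card_univ, eq_comm]

theorem SimpleGraph.Walk.isPath_and_disjoint_iff_length_add_length_eq {V : Type*} [Fintype V]
    {G : SimpleGraph V} {a b c d : V} (P₁ : G.Walk a b) (P₂ : G.Walk c d)
    (hcover : ∀ v, v ∈ P₁.support ∨ v ∈ P₂.support) :
    (P₁.IsPath ∧ P₂.IsPath ∧ ∀ v, v ∈ P₁.support → v ∉ P₂.support) ↔
      P₁.length + P₂.length + 2 = Fintype.card V := by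
  have hmem : ∀ v, v ∈ P₁.support ++ P₂.support := by simpa using hcover
  calc _ ↔ (P₁.support ++ P₂.support).Nodup := by
        rw [List.nodup_append', Walk.isPath_def, Walk.isPath_def]; rfl
    _ ↔ _ := by
        rw [List.nodup_iff_length_eq_card_of_forall_mem hmem, List.length_append,
          Walk.length_support, Walk.length_support]
        omega

section
variable {M : ℕ} {S : Set (ℕ × ℕ)}

theorem arcGadget_not_adj_inl_inl (a b : Fin 4) :
    ¬ (arcGadget M S).Adj (.inl a) (.inl b) := by
  simp [arcGadget, arcRel]

theorem arcGadget_adj_inr_inr {j k : Fin (2 * M)} :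
    (arcGadget M S).Adj (.inr j) (.inr k) ↔ (j : ℕ) + 1 = k ∨ (k : ℕ) + 1 = j := by
  simp only [arcGadget, fromRel_adj, arcRel, ne_eq, Sum.inr.injEq, Fin.ext_iff]
  omega

theorem arcGadget_adj_inl_zero_inr {j : Fin (2 * M)} :
    (arcGadget M S).Adj (.inl 0) (.inr j) ↔ (j : ℕ) = 0 := by
  simp [arcGadget, arcRel]

theorem arcGadget_adj_inl_two_inr {j : Fin (2 * M)} :
    (arcGadget M S).Adj (.inl 2) (.inr j) ↔ (j : ℕ) = 2 * M - 1 := by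
  simp [arcGadget, arcRel]

theorem arcGadget_adj_inr_inl_one {j : Fin (2 * M)} :
    (arcGadget M S).Adj (.inr j) (.inl 1) ↔ ∃ x y, (x, y) ∈ S ∧ (j : ℕ) = 2 * x - 1 := by
  simp [arcGadget, arcRel]

theorem arcGadget_adj_inr_inl_three {j : Fin (2 * M)} :
    (arcGadget M S).Adj (.inr j) (.inl 3) ↔ ∃ x y, (x, y) ∈ S ∧ (j : ℕ) = 2 * x := by
  simp [arcGadget, arcRel]

theorem arcGadget_length_add_eq_of_isPath_to_inl_one (hpos : ∀ p ∈ S, 1 ≤ p.1)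
    {j : Fin (2 * M)} (W : (arcGadget M S).Walk (.inr j) (.inl 1)) (hW : W.IsPath)
    (hsupp : ∀ v ∈ W.support, v = .inl 1 ∨ ∃ k : Fin (2 * M), (j : ℕ) ≤ k ∧ v = .inr k) :
    ∃ x y, (x, y) ∈ S ∧ W.length + j = 2 * x := by
  obtain ⟨n, hn⟩ : ∃ n, W.length = n := ⟨_, rfl⟩
  induction n generalizing j with
  | zero => cases W; simp at hn
  | succ n ih =>
    cases W with | cons h W => ?_
    rw [Walk.cons_isPath_iff] at hW
    rcases hsupp _ (List.mem_cons_of_mem _ W.start_mem_support) with rfl | ⟨k, hjk, rfl⟩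
    · obtain ⟨x, y, hxy, hj⟩ := arcGadget_adj_inr_inl_one.mp h
      obtain rfl := Walk.eq_nil_iff_nil.mpr (Walk.isPath_iff_nil.mp hW.1)
      exact ⟨x, y, hxy, by have := hpos _ hxy; simp; omega⟩
    · have hk : (j : ℕ) + 1 = k := by have := arcGadget_adj_inr_inr.mp h; omega
      have hsupp' : ∀ v ∈ W.support, v = .inl 1 ∨ ∃ i : Fin (2 * M), (k : ℕ) ≤ i ∧ v = .inr i := by
        intro v hv
        rcases hsupp v (List.mem_cons_of_mem _ hv) with rfl | ⟨i, hji, rfl⟩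
        · exact .inl rfl
        · have hij : (i : ℕ) ≠ j := fun h => hW.2 (Fin.ext h ▸ hv)
          exact .inr ⟨i, by omega, rfl⟩
      obtain ⟨x, y, hxy, hlen⟩ := ih W hW.1 hsupp' (by simpa using hn)
      exact ⟨x, y, hxy, by simp; omega⟩

theorem arcGadget_length_add_eq_of_isPath_to_inl_three
    {j : Fin (2 * M)} (W : (arcGadget M S).Walk (.inr j) (.inl 3)) (hW : W.IsPath)
    (hsupp : ∀ v ∈ W.support, v = .inl 3 ∨ ∃ k : Fin (2 * M), (k : ℕ) ≤ j ∧ v = .inr k) :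
    ∃ x y, (x, y) ∈ S ∧ W.length + 2 * x = j + 1 := by
  obtain ⟨n, hn⟩ : ∃ n, W.length = n := ⟨_, rfl⟩
  induction n generalizing j with
  | zero => cases W; simp at hn
  | succ n ih =>
    cases W with | cons h W => ?_
    rw [Walk.cons_isPath_iff] at hW
    rcases hsupp _ (List.mem_cons_of_mem _ W.start_mem_support) with rfl | ⟨k, hkj, rfl⟩
    · obtain ⟨x, y, hxy, hj⟩ := arcGadget_adj_inr_inl_three.mp h
      obtain rfl := Walk.eq_nil_iff_nil.mpr (Walk.isPath_iff_nil.mp hW.1)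
      exact ⟨x, y, hxy, by simp; omega⟩
    · have hk : (k : ℕ) + 1 = j := by have := arcGadget_adj_inr_inr.mp h; omega
      have hsupp' : ∀ v ∈ W.support, v = .inl 3 ∨ ∃ i : Fin (2 * M), (i : ℕ) ≤ k ∧ v = .inr i := by
        intro v hv
        rcases hsupp v (List.mem_cons_of_mem _ hv) with rfl | ⟨i, hij, rfl⟩
        · exact .inl rfl
        · have hij' : (i : ℕ) ≠ j := fun h => hW.2 (Fin.ext h ▸ hv)
          exact .inr ⟨i, by omega, rfl⟩
      obtain ⟨x, y, hxy, hlen⟩ := ih W hW.1 hsupp' (by simpa using hn)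
      exact ⟨x, y, hxy, by simp; omega⟩

theorem arcGadget_exists_walk_inr_inr (i : ℕ) :
    ∀ n (h : i + n < 2 * M), ∃ W : (arcGadget M S).Walk (.inr ⟨i, by omega⟩) (.inr ⟨i + n, h⟩),
      W.length = n ∧ ∀ k : Fin (2 * M), i ≤ k → (k : ℕ) ≤ i + n → .inr k ∈ W.support
  | 0, _ => ⟨.nil, rfl, fun k hik hki => by simp [Fin.ext_iff]; omega⟩
  | n + 1, h => by
    obtain ⟨W, hlen, hsupp⟩ := arcGadget_exists_walk_inr_inr i n (by omega)
    refine ⟨W.concat (arcGadget_adj_inr_inr.mpr (.inl rfl)), by simp [hlen], fun k hik hki => ?_⟩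
    rw [Walk.support_concat, List.mem_append]
    rcases Nat.lt_or_eq_of_le hki with hki | hki
    · exact .inl (hsupp k hik (by omega))
    · exact .inr (by simp [Fin.ext_iff, hki])

theorem arcGadget_lengths_of_covering_paths (hsum : ∀ p ∈ S, p.1 + p.2 = M)
    (hpos : ∀ p ∈ S, 1 ≤ p.1)
    (P₁ : (arcGadget M S).Walk (.inl 0) (.inl 1)) (P₂ : (arcGadget M S).Walk (.inl 2) (.inl 3))
    (hP₁ : P₁.IsPath) (hP₂ : P₂.IsPath) (hdisj : ∀ v, v ∈ P₁.support → v ∉ P₂.support)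
    (hcover : ∀ v, v ∈ P₁.support ∨ v ∈ P₂.support) :
    ∃ x y, (x, y) ∈ S ∧ P₁.length = 2 * x + 1 ∧ P₂.length = 2 * y + 1 := by
  have hcard :=
    (Walk.isPath_and_disjoint_iff_length_add_length_eq P₁ P₂ hcover).mp ⟨hP₁, hP₂, hdisj⟩
  cases P₁ with | @cons _ u₁ _ h₁ Q₁ => ?_
  cases P₂ with | @cons _ u₂ _ h₂ Q₂ => ?_
  rcases u₁ with a | j₁
  · exact absurd h₁ (arcGadget_not_adj_inl_inl _ _)
  rcases u₂ with a | j₂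
  · exact absurd h₂ (arcGadget_not_adj_inl_inl _ _)
  rw [Walk.cons_isPath_iff] at hP₁ hP₂
  have hQ₁ : ∀ v ∈ Q₁.support, v = .inl 1 ∨ ∃ k : Fin (2 * M), (j₁ : ℕ) ≤ k ∧ v = .inr k := by
    rintro (a | k) hv
    · fin_cases a
      · exact absurd hv hP₁.2
      · exact .inl rfl
      · exact absurd (Walk.start_mem_support _) (hdisj _ (List.mem_cons_of_mem _ hv))
      · exact absurd (Walk.end_mem_support _) (hdisj _ (List.mem_cons_of_mem _ hv))
    · exact .inr ⟨k, by simp [arcGadget_adj_inl_zero_inr.mp h₁], rfl⟩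
  have hQ₂ : ∀ v ∈ Q₂.support, v = .inl 3 ∨ ∃ k : Fin (2 * M), (k : ℕ) ≤ j₂ ∧ v = .inr k := by
    rintro (a | k) hv
    · fin_cases a
      · exact absurd (Walk.start_mem_support _) (fun h => hdisj _ h (List.mem_cons_of_mem _ hv))
      · exact absurd (Walk.end_mem_support _) (fun h => hdisj _ h (List.mem_cons_of_mem _ hv))
      · exact absurd hv hP₂.2
      · exact .inl rfl
    · exact .inr ⟨k, by rw [arcGadget_adj_inl_two_inr.mp h₂]; omega, rfl⟩
  obtain ⟨x, -, -, hlen₁⟩ := arcGadget_length_add_eq_of_isPath_to_inl_one hpos Q₁ hP₁.1 hQ₁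
  obtain ⟨x', y, hxy, hlen₂⟩ := arcGadget_length_add_eq_of_isPath_to_inl_three Q₂ hP₂.1 hQ₂
  have hj₁ := arcGadget_adj_inl_zero_inr.mp h₁
  have hj₂ := arcGadget_adj_inl_two_inr.mp h₂
  have hxy_sum := hsum _ hxy
  simp only [Walk.length_cons, Fintype.card_sum, Fintype.card_fin] at hcard ⊢
  exact ⟨x', y, hxy, by omega, by omega⟩

theorem arcGadget_exists_covering_paths {x y : ℕ} (hxy : (x, y) ∈ S) (hsum : x + y = M)
    (hx : 1 ≤ x) (hy : 1 ≤ y) :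
    ∃ (P₁ : (arcGadget M S).Walk (.inl 0) (.inl 1)) (P₂ : (arcGadget M S).Walk (.inl 2) (.inl 3)),
      P₁.IsPath ∧ P₂.IsPath ∧ (∀ v, v ∈ P₁.support → v ∉ P₂.support) ∧
      (∀ v, v ∈ P₁.support ∨ v ∈ P₂.support) ∧
      P₁.length = 2 * x + 1 ∧ P₂.length = 2 * y + 1 := by
  obtain ⟨W₁, hlen₁, hsupp₁⟩ :=
    arcGadget_exists_walk_inr_inr (M := M) (S := S) 0 (2 * x - 1) (by omega)
  obtain ⟨W₂, hlen₂, hsupp₂⟩ :=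
    arcGadget_exists_walk_inr_inr (M := M) (S := S) (2 * x) (2 * y - 1) (by omega)
  let P₁ := Walk.cons (arcGadget_adj_inl_zero_inr.mpr rfl)
    (W₁.concat (arcGadget_adj_inr_inl_one.mpr ⟨x, y, hxy, by simp⟩))
  let P₂ := Walk.cons (arcGadget_adj_inl_two_inr.mpr (by simp; omega))
    (W₂.reverse.concat (arcGadget_adj_inr_inl_three.mpr ⟨x, y, hxy, rfl⟩))
  have hcover : ∀ v, v ∈ P₁.support ∨ v ∈ P₂.support := by
    rintro (a | k)
    · fin_cases a <;> simp [P₁, P₂]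
    · by_cases hk : (k : ℕ) < 2 * x
      · exact .inl (by simp [P₁, hsupp₁ k (Nat.zero_le _) (by omega)])
      · exact .inr (by simp [P₂, hsupp₂ k (by omega) (by omega)])
  have hlen : P₁.length + P₂.length + 2 = Fintype.card (Fin 4 ⊕ Fin (2 * M)) := by
    simp [P₁, P₂, hlen₁, hlen₂]
    omega
  obtain ⟨hP₁, hP₂, hdisj⟩ :=
    (Walk.isPath_and_disjoint_iff_length_add_length_eq P₁ P₂ hcover).mpr hlen
  exact ⟨P₁, P₂, hP₁, hP₂, hdisj, hcover, by simp [P₁, hlen₁]; omega, by simp [P₂, hlen₂]; omega⟩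

end

theorem stmt15_general (M : ℕ) (S : Set (ℕ × ℕ))
    (hS : ∀ p ∈ S, p.1 + p.2 = M ∧ 1 ≤ p.1 ∧ p.1 ≤ M - 1 ∧ 1 ≤ p.2 ∧ p.2 ≤ M - 1) :
    (∀ (P₁ : (arcGadget M S).Walk (Sum.inl 0) (Sum.inl 1))
       (P₂ : (arcGadget M S).Walk (Sum.inl 2) (Sum.inl 3)),
      P₁.IsPath → P₂.IsPath →
      (∀ v, v ∈ P₁.support → v ∉ P₂.support) →
      (∀ v, v ∈ P₁.support ∨ v ∈ P₂.support) →
      ∃ x y, (x, y) ∈ S ∧ P₁.length = 2 * x + 1 ∧ P₂.length = 2 * y + 1) ∧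
    (∀ x y, (x, y) ∈ S →
      ∃ (P₁ : (arcGadget M S).Walk (Sum.inl 0) (Sum.inl 1))
        (P₂ : (arcGadget M S).Walk (Sum.inl 2) (Sum.inl 3)),
        P₁.IsPath ∧ P₂.IsPath ∧
        (∀ v, v ∈ P₁.support → v ∉ P₂.support) ∧
        (∀ v, v ∈ P₁.support ∨ v ∈ P₂.support) ∧
        P₁.length = 2 * x + 1 ∧ P₂.length = 2 * y + 1) := by
  refine ⟨fun P₁ P₂ => arcGadget_lengths_of_covering_paths (fun p hp => (hS p hp).1)
    (fun p hp => (hS p hp).2.1) P₁ P₂, fun x y hxy => ?_⟩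
  obtain ⟨hsum, hx, -, hy, -⟩ := hS _ hxy
  exact arcGadget_exists_covering_paths hxy hsum hx hy

/-- Lemma 7.14, properties (iv) and (v): vertex-disjoint paths `P₁ : κ₁ → κ₂` and
`P₂ : λ₁ → λ₂` covering all vertices of the gadget exist exactly with lengths
`(2x+1, 2y+1)` for `(x,y) ∈ S`. -/
theorem stmt15 (M : ℕ) (hM : 2 ≤ M) (S : Set (ℕ × ℕ))
    (hS : ∀ p ∈ S, p.1 + p.2 = M ∧ 1 ≤ p.1 ∧ p.1 ≤ M - 1 ∧ 1 ≤ p.2 ∧ p.2 ≤ M - 1) :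
    (∀ (P₁ : (arcGadget M S).Walk (Sum.inl 0) (Sum.inl 1))
       (P₂ : (arcGadget M S).Walk (Sum.inl 2) (Sum.inl 3)),
      P₁.IsPath → P₂.IsPath →
      (∀ v, v ∈ P₁.support → v ∉ P₂.support) →
      (∀ v, v ∈ P₁.support ∨ v ∈ P₂.support) →
      ∃ x y, (x, y) ∈ S ∧ P₁.length = 2 * x + 1 ∧ P₂.length = 2 * y + 1) ∧
    (∀ x y, (x, y) ∈ S →
      ∃ (P₁ : (arcGadget M S).Walk (Sum.inl 0) (Sum.inl 1))
        (P₂ : (arcGadget M S).Walk (Sum.inl 2) (Sum.inl 3)),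
        P₁.IsPath ∧ P₂.IsPath ∧
        (∀ v, v ∈ P₁.support → v ∉ P₂.support) ∧
        (∀ v, v ∈ P₁.support ∨ v ∈ P₂.support) ∧
        P₁.length = 2 * x + 1 ∧ P₂.length = 2 * y + 1) :=
  stmt15_general M S hS
end

section
/- Let B' be an edge-weighted bipartite multigraph obtained from a bipartite graph B by the following construction: every original edge e of B keeps weight 0, and for each t ∈ {1,…,ℓ} with e ∈ E_t a parallel copy e^t of e is added with weight 2^{t−1} + 2^{2ℓ−t}. Then B has a perfect matching M containing ℓ distinct edges e₁,…,e_ℓ with e_t ∈ E_t for each t, if and only if B' has a perfect matching of total weight exactly 2^{2ℓ} − 1. -/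
open Finset

/-- Sum of the copy weights over all types equals `2^(2ℓ) - 1`. -/
lemma sumw (ℓ : ℕ) :
    ∑ t ∈ Finset.range ℓ, (2 ^ t + 2 ^ (2 * ℓ - 1 - t)) = 2 ^ (2 * ℓ) - 1 := by
  induction ℓ with
  | zero => simp
  | succ ℓ ih =>
    rw [Finset.sum_range_succ']
    have hstep : ∀ t ∈ Finset.range ℓ,
        (2 ^ (t + 1) + 2 ^ (2 * (ℓ + 1) - 1 - (t + 1)))
          = 2 * (2 ^ t + 2 ^ (2 * ℓ - 1 - t)) := by
      intro t ht
      have ht' : t < ℓ := Finset.mem_range.mp ht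
      have h1 : 2 * (ℓ + 1) - 1 - (t + 1) = (2 * ℓ - 1 - t) + 1 := by omega
      rw [h1, pow_succ, pow_succ]
      ring
    rw [Finset.sum_congr rfl hstep, ← Finset.mul_sum, ih]
    have hP : 1 ≤ 2 ^ (2 * ℓ) := Nat.one_le_two_pow
    have h2 : 2 * (ℓ + 1) - 1 - 0 = 2 * ℓ + 1 := by omega
    have h3 : 2 * (ℓ + 1) = 2 * ℓ + 2 := by omega
    rw [h2, h3, pow_succ, pow_succ, pow_succ]
    omega

/-- Uniqueness of binary representation: if a multiset of copy weights sums to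
`2^(2ℓ) - 1`, then each type is used exactly once. -/
lemma keylem (ℓ : ℕ) (n : ℕ → ℕ)
    (h : ∑ t ∈ Finset.range ℓ, n t * (2 ^ t + 2 ^ (2 * ℓ - 1 - t)) = 2 ^ (2 * ℓ) - 1) :
    ∀ t < ℓ, n t = 1 := by
  induction ℓ generalizing n with
  | zero => intro t ht; omega
  | succ ℓ ih =>
    rw [Finset.sum_range_succ'] at h
    have hstep : ∀ t ∈ Finset.range ℓ,
        n (t + 1) * (2 ^ (t + 1) + 2 ^ (2 * (ℓ + 1) - 1 - (t + 1)))
          = 2 * (n (t + 1) * (2 ^ t + 2 ^ (2 * ℓ - 1 - t))) := by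
      intro t ht
      have ht' : t < ℓ := Finset.mem_range.mp ht
      have h1 : 2 * (ℓ + 1) - 1 - (t + 1) = (2 * ℓ - 1 - t) + 1 := by omega
      rw [h1, pow_succ, pow_succ]
      ring
    rw [Finset.sum_congr rfl hstep, ← Finset.mul_sum] at h
    set S := ∑ t ∈ Finset.range ℓ, n (t + 1) * (2 ^ t + 2 ^ (2 * ℓ - 1 - t)) with hS
    have hP : 1 ≤ 2 ^ (2 * ℓ) := Nat.one_le_two_pow
    have h2 : 2 * (ℓ + 1) - 1 - 0 = 2 * ℓ + 1 := by omega
    have h3 : 2 * (ℓ + 1) = 2 * ℓ + 2 := by omega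
    rw [h2, h3, pow_succ, pow_succ, pow_succ, pow_zero] at h
    -- now h : 2 * S + n 0 * (1 + 2^(2ℓ) * 2) = 2^(2ℓ) * 2 * 2 - 1
    have hn0 : n 0 = 1 := by
      rcases Nat.lt_or_ge (n 0) 2 with h2' | h2'
      · interval_cases h0 : (n 0) <;> omega
      · exfalso
        have := Nat.mul_le_mul_right (1 + 2 ^ (2 * ℓ) * 2) h2'
        omega
    rw [hn0] at h
    have hS' : S = 2 ^ (2 * ℓ) - 1 := by omega
    have := ih (fun t => n (t + 1)) hS'
    intro t ht
    match t with
    | 0 => exact hn0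
    | t + 1 => exact this t (by omega)

/-- Correctness of the Lemma 3.2 reduction: the bipartite graph `B` (edge set `E`
between sides `L`, `R`, with hitting sets `E₁,…,E_ℓ`) has a perfect matching
containing `ℓ` distinct edges `e_t ∈ E_t` iff the weighted multigraph `B'` (each edge
keeps a weight-0 original copy and, for each `t` with `e ∈ E_t`, gains a parallel copy
of weight `2^(t−1) + 2^(2ℓ−t)`, here 0-indexed as `2^t + 2^(2ℓ−1−t)`) has a perfect
matching of total weight exactly `2^(2ℓ) − 1`. A matching of `B'` is encoded as a
matching `m` of `B` together with a choice `c x` of the copy (`none` = original) used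
on the edge at `x`. -/
theorem stmt19 {L R : Type*} [Fintype L] (ℓ : ℕ)
    (E : Set (L × R)) (Et : Fin ℓ → Set (L × R)) (hEt : ∀ t, Et t ⊆ E) :
    (∃ m : L ≃ R, (∀ x, (x, m x) ∈ E) ∧
      ∃ g : Fin ℓ → L, Function.Injective g ∧ ∀ t, (g t, m (g t)) ∈ Et t) ↔
    (∃ (m : L ≃ R) (c : L → Option (Fin ℓ)),
      (∀ x, (x, m x) ∈ E) ∧
      (∀ x t, c x = some t → (x, m x) ∈ Et t) ∧
      ∑ x : L, (c x).elim 0 (fun t => 2 ^ (t : ℕ) + 2 ^ (2 * ℓ - 1 - (t : ℕ)))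
        = 2 ^ (2 * ℓ) - 1) := by
  classical
  set w : Fin ℓ → ℕ := fun t => 2 ^ (t : ℕ) + 2 ^ (2 * ℓ - 1 - (t : ℕ)) with hw
  set f : Option (Fin ℓ) → ℕ := fun o => o.elim 0 w with hf
  constructor
  · rintro ⟨m, hm, g, hginj, hg⟩
    refine ⟨m, Function.partialInv g, hm, ?_, ?_⟩
    · intro x t hxt
      have hgx : g t = x :=
        ((Function.partialInv_of_injective hginj) t x).mp hxt
      rw [← hgx]; exact hg t
    · have hzero : ∀ x ∈ (univ : Finset L), x ∉ Finset.image g univ →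
          f (Function.partialInv g x) = 0 := by
        intro x _ hx
        rcases hc : Function.partialInv g x with _ | t
        · simp [hf]
        · exfalso
          have : g t = x := ((Function.partialInv_of_injective hginj) t x).mp hc
          exact hx (Finset.mem_image.mpr ⟨t, Finset.mem_univ _, this⟩)
      calc ∑ x : L, f (Function.partialInv g x)
          = ∑ x ∈ Finset.image g univ, f (Function.partialInv g x) :=
            (Finset.sum_subset (Finset.subset_univ _) hzero).symm
        _ = ∑ t : Fin ℓ, f (Function.partialInv g (g t)) :=
            Finset.sum_image (fun a _ b _ hab => hginj hab)
        _ = ∑ t : Fin ℓ, w t := by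
            refine Finset.sum_congr rfl fun t _ => ?_
            rw [Function.partialInv_left hginj]; simp [hf]
        _ = ∑ t ∈ Finset.range ℓ, (2 ^ t + 2 ^ (2 * ℓ - 1 - t)) :=
            Fin.sum_univ_eq_sum_range (fun t => 2 ^ t + 2 ^ (2 * ℓ - 1 - t)) ℓ
        _ = 2 ^ (2 * ℓ) - 1 := sumw ℓ
  · rintro ⟨m, c, hm, hc, hsum⟩
    -- fiberwise decomposition of the sum
    have hfib : ∑ x : L, f (c x)
        = ∑ o : Option (Fin ℓ), (univ.filter fun x => c x = o).card * f o := by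
      rw [← Finset.sum_fiberwise' (univ : Finset L) c f]
      exact Finset.sum_congr rfl fun o _ => by
        rw [Finset.sum_const, smul_eq_mul]
    have hopt : ∑ o : Option (Fin ℓ), (univ.filter fun x => c x = o).card * f o
        = ∑ t : Fin ℓ, (univ.filter fun x => c x = some t).card * w t := by
      rw [Fintype.sum_option]
      simp [hf]
    set N : ℕ → ℕ := fun k =>
      if hk : k < ℓ then (univ.filter fun x => c x = some ⟨k, hk⟩).card else 0 with hN
    have hNsum : ∑ t ∈ Finset.range ℓ, N t * (2 ^ t + 2 ^ (2 * ℓ - 1 - t))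
        = 2 ^ (2 * ℓ) - 1 := by
      rw [← Fin.sum_univ_eq_sum_range (fun k => N k * (2 ^ k + 2 ^ (2 * ℓ - 1 - k))) ℓ]
      rw [← hsum, hfib, hopt]
      refine (Finset.sum_congr rfl fun t _ => ?_).symm
      simp [hN, t.isLt, hw]
    have hone := keylem ℓ N hNsum
    have hcard : ∀ t : Fin ℓ, (univ.filter fun x => c x = some t).card = 1 := by
      intro t
      have := hone t t.isLt
      simpa [hN, t.isLt] using this
    have hex : ∀ t : Fin ℓ, ∃ x : L, c x = some t := by
      intro t
      have h1 := hcard t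
      rcases Finset.card_eq_one.mp h1 with ⟨a, ha⟩
      have haf : a ∈ Finset.univ.filter fun x => c x = some t := by
        rw [ha]; exact Finset.mem_singleton_self a
      exact ⟨a, (Finset.mem_filter.mp haf).2⟩
    choose g hgc using hex
    refine ⟨m, hm, g, ?_, fun t => hc _ t (hgc t)⟩
    intro t t' htt
    have : some t = some t' := by rw [← hgc t, ← hgc t', htt]
    exact Option.some_injective _ this
end
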